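/- Let m ≥ 3 be an integer and consider the generalized Petersen graph GP(4m, 2m-1). Then there exists an automorphism of GP(4m, 2m-1) interchanging the vertices u_0 and v_m; in particular, the pair u_0, v_m is balanced. -/

import Mathlib

/-!
In `ZMod (4m)` the inner step `k = 2m - 1` satisfies `k² = 1`. Hence for `c = ±k` the map
`u_i ↦ v_{ci + a}`, `v_i ↦ u_{ci + a}` exchanges spokes with spokes, outer edges (step `1`)
with inner edges (step `c`), and inner edges (step `k`) with outer edges (step `ck = ±1`);
it is an involution when `ca + a = 0`, which for `a = m` holds with `c = (-1)^m k`. An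
automorphism swapping `u` and `v` carries `W_{uv}` onto `W_{vu}`, so the pair is balanced.
-/

open SimpleGraph

/-- The set of vertices strictly closer to `u` than to `v`. -/
def wSet {V : Type*} (G : SimpleGraph V) (u v : V) : Set V :=
  {w | G.dist u w < G.dist v w}

/-- The pair `u, v` is balanced if `|W_{uv}| = |W_{vu}|`. -/
def IsBalancedPair {V : Type*} (G : SimpleGraph V) (u v : V) : Prop :=
  (wSet G u v).ncard = (wSet G v u).ncard

/-- `G` is `ℓ`-distance-balanced if every pair of vertices at distance `ℓ` is balanced. -/
def IsDistBalanced {V : Type*} (G : SimpleGraph V) (ℓ : ℕ) : Prop :=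
  ∀ u v : V, G.dist u v = ℓ → IsBalancedPair G u v

/-- `G` is highly distance-balanced if it is `ℓ`-distance-balanced for all `1 ≤ ℓ ≤ diam`. -/
def IsHighlyDistBalanced {V : Type*} (G : SimpleGraph V) : Prop :=
  ∀ ℓ : ℕ, 1 ≤ ℓ → ℓ ≤ G.diam → IsDistBalanced G ℓ

/-- The generalized Petersen graph `GP(n,k)`: `Sum.inl i` is the outer vertex `u_i`,
`Sum.inr i` is the inner vertex `v_i`. -/
def GP (n k : ℕ) : SimpleGraph (ZMod n ⊕ ZMod n) :=
  SimpleGraph.fromRel (fun x y =>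
    match x, y with
    | Sum.inl i, Sum.inl j => j = i + 1
    | Sum.inr i, Sum.inr j => j = i + (k : ZMod n)
    | Sum.inl i, Sum.inr j => i = j
    | Sum.inr _, Sum.inl _ => False)

/-- The Cayley graph of a group with connection set `S` (intended for `S = S⁻¹`, `1 ∉ S`). -/
def cayleyGraph {A : Type*} [Group A] (S : Set A) : SimpleGraph A :=
  SimpleGraph.fromRel (fun g h => g⁻¹ * h ∈ S)

namespace SimpleGraph

variable {V W : Type*} {G : SimpleGraph V} {H : SimpleGraph W}

lemma Hom.edist_map_le (f : G →g H) (u v : V) : H.edist (f u) (f v) ≤ G.edist u v := by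
  by_cases h : G.Reachable u v
  · obtain ⟨p, hp⟩ := h.exists_walk_length_eq_edist
    calc H.edist (f u) (f v) ≤ (p.map f).length := edist_le _
      _ = G.edist u v := by rw [Walk.length_map, hp]
  · simp [edist_eq_top_of_not_reachable h]

lemma Iso.edist_map (f : G ≃g H) (u v : V) : H.edist (f u) (f v) = G.edist u v :=
  le_antisymm (Hom.edist_map_le f.toHom u v)
    (by simpa using Hom.edist_map_le f.symm.toHom (f u) (f v))

lemma Iso.dist_map (f : G ≃g H) (u v : V) : H.dist (f u) (f v) = G.dist u v := by
  simp only [dist, f.edist_map]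

def Iso.ofInvolutive (f : V → V) (hf : Function.Involutive f)
    (hadj : ∀ {a b}, G.Adj a b → G.Adj (f a) (f b)) : G ≃g G where
  toEquiv := hf.toPerm f
  map_rel_iff' := ⟨fun h => by simpa [hf _] using hadj h, hadj⟩

end SimpleGraph

lemma isBalancedPair_of_iso_swap {V : Type*} {G : SimpleGraph V} (α : G ≃g G) {u v : V}
    (hu : α u = v) (hv : α v = u) : IsBalancedPair G u v := by
  have hpre : α ⁻¹' wSet G v u = wSet G u v := by
    ext w
    change G.dist v (α w) < G.dist u (α w) ↔ G.dist u w < G.dist v w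
    rw [← α.dist_map u w, ← α.dist_map v w, hu, hv]
  rw [IsBalancedPair, ← hpre, Set.ncard_preimage_of_injective_subset_range α.injective
    (by simp [α.surjective.range_eq])]

namespace GP

variable {n k : ℕ} {c a : ZMod n}

def rimSwap (c a : ZMod n) : ZMod n ⊕ ZMod n → ZMod n ⊕ ZMod n :=
  Sum.elim (fun i => Sum.inr (c * i + a)) (fun i => Sum.inl (c * i + a))

@[simp]
lemma rimSwap_inl (i : ZMod n) : rimSwap c a (Sum.inl i) = Sum.inr (c * i + a) := rfl

@[simp]
lemma rimSwap_inr (i : ZMod n) : rimSwap c a (Sum.inr i) = Sum.inl (c * i + a) := rfl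

lemma rimSwap_injective (hc : c * c = 1) : Function.Injective (rimSwap c a) := by
  have hmul : ∀ i j : ZMod n, c * i + a = c * j + a → i = j := fun i j h => by
    linear_combination c * add_right_cancel h - (i - j) * hc
  rintro (i | i) (j | j) h <;>
    simp only [rimSwap_inl, rimSwap_inr, Sum.inl.injEq, Sum.inr.injEq, reduceCtorEq] at h <;>
    rw [hmul i j h]

lemma rimSwap_involutive (hc : c * c = 1) (ha : c * a + a = 0) :
    Function.Involutive (rimSwap c a) := by
  rintro (i | i) <;> simp only [rimSwap_inl, rimSwap_inr] <;> congr 1 <;>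
    linear_combination i * hc + ha

lemma adj_rimSwap (hk : (k : ZMod n) * k = 1) (hc : c = k ∨ c = -k) {x y : ZMod n ⊕ ZMod n}
    (h : (GP n k).Adj x y) : (GP n k).Adj (rimSwap c a x) (rimSwap c a y) := by
  have hcc : c * c = 1 := by rcases hc with rfl | rfl <;> linear_combination hk
  refine (fromRel_adj _ _ _).2 ⟨(rimSwap_injective hcc).ne h.ne, ?_⟩
  obtain ⟨-, hxy⟩ := (fromRel_adj _ _ _).1 h
  rcases x with i | i <;> rcases y with j | j <;>
    simp only [rimSwap_inl, rimSwap_inr, or_false, false_or] at hxy ⊢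
  · rcases hxy with rfl | rfl <;> rcases hc with rfl | rfl
    exacts [Or.inl (by ring), Or.inr (by ring), Or.inr (by ring), Or.inl (by ring)]
  · rw [hxy]
  · rw [hxy]
  · rcases hxy with rfl | rfl <;> rcases hc with rfl | rfl
    exacts [Or.inl (by linear_combination hk), Or.inr (by linear_combination hk),
      Or.inr (by linear_combination hk), Or.inl (by linear_combination hk)]

def rimSwapIso (hk : (k : ZMod n) * k = 1) (hc : c = k ∨ c = -k) (ha : c * a + a = 0) :
    GP n k ≃g GP n k :=
  Iso.ofInvolutive (rimSwap c a)
    (rimSwap_involutive (by rcases hc with rfl | rfl <;> linear_combination hk) ha)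
    (adj_rimSwap hk hc)

@[simp]
lemma rimSwapIso_apply (hk : (k : ZMod n) * k = 1) (hc : c = k ∨ c = -k) (ha : c * a + a = 0)
    (x : ZMod n ⊕ ZMod n) : rimSwapIso hk hc ha x = rimSwap c a x := rfl

end GP

section

variable {m : ℕ}

lemma natCast_two_mul_sub_one_eq (hm : 1 ≤ m) :
    ((2 * m - 1 : ℕ) : ZMod (4 * m)) = 2 * m - 1 := by
  rw [Nat.cast_sub (by omega)]
  push_cast
  ring

lemma four_mul_natCast_eq_zero : (4 * m : ZMod (4 * m)) = 0 := by
  exact_mod_cast ZMod.natCast_self (4 * m)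

lemma natCast_two_mul_sub_one_mul_self (hm : 1 ≤ m) :
    ((2 * m - 1 : ℕ) : ZMod (4 * m)) * (2 * m - 1 : ℕ) = 1 := by
  rw [natCast_two_mul_sub_one_eq hm]
  linear_combination ((m : ZMod (4 * m)) - 1) * four_mul_natCast_eq_zero

/-- For even `m` take `c = 2m - 1`, so `cm + m = 2m²`; for odd `m` take `c = -(2m - 1)`, so
`cm + m = -2m(m - 1)`. Both are multiples of `4m`. -/
lemma exists_sign_mul_add_self_eq_zero (hm : 1 ≤ m) :
    ∃ c : ZMod (4 * m), (c = (2 * m - 1 : ℕ) ∨ c = -(2 * m - 1 : ℕ)) ∧ c * m + m = 0 := by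
  rw [natCast_two_mul_sub_one_eq hm]
  have h4m := four_mul_natCast_eq_zero (m := m)
  obtain ⟨t, rfl | rfl⟩ := Nat.even_or_odd' m
  · refine ⟨_, Or.inl rfl, ?_⟩
    push_cast at h4m ⊢
    linear_combination (t : ZMod (4 * (2 * t))) * h4m
  · refine ⟨_, Or.inr rfl, ?_⟩
    push_cast at h4m ⊢
    linear_combination -(t : ZMod (4 * (2 * t + 1))) * h4m

end

theorem statement_16 (m : ℕ) (hm : 3 ≤ m) :
    (∃ α : GP (4 * m) (2 * m - 1) ≃g GP (4 * m) (2 * m - 1),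
        α (Sum.inl 0) = Sum.inr (m : ZMod (4 * m)) ∧
        α (Sum.inr (m : ZMod (4 * m))) = Sum.inl 0) ∧
    IsBalancedPair (GP (4 * m) (2 * m - 1)) (Sum.inl 0) (Sum.inr (m : ZMod (4 * m))) := by
  obtain ⟨c, hc, hcm⟩ := exists_sign_mul_add_self_eq_zero (by omega : 1 ≤ m)
  let α := GP.rimSwapIso (natCast_two_mul_sub_one_mul_self (by omega)) hc hcm
  have hu : α (Sum.inl 0) = Sum.inr (m : ZMod (4 * m)) := by simp [α]
  have hv : α (Sum.inr (m : ZMod (4 * m))) = Sum.inl 0 := by simp [α, hcm]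
  exact ⟨⟨α, hu, hv⟩, isBalancedPair_of_iso_swap α hu hv⟩
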